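/- The augmented risk satisfies R_T(θ) ≥ (1 − C_T(θ))/2, where R_T is the average of the original-input error probability and the dual-input error probability, and C_T is the probability of duality consistency. -/

import Mathlib

open MeasureTheory

/- Wherever f is correct on both x and T x, it is duality consistent at x, since
f (T x) = φ (a* x) = φ (f x); so inconsistency forces an error on x or on T x, and the union
bound gives 1 - C_T ≤ R + R^T. -/

theorem MeasureTheory.one_sub_measureReal_le_add_of_compl_subset {Ω : Type*}
    [MeasurableSpace Ω] (μ : Measure Ω) [IsProbabilityMeasure μ] {s t u : Set Ω}
    (h : uᶜ ⊆ s ∪ t) : 1 - μ.real u ≤ μ.real s + μ.real t := by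
  have h_univ : μ.real Set.univ ≤ μ.real u + μ.real uᶜ :=
    Set.union_compl_self u ▸ measureReal_union_le u uᶜ
  calc 1 - μ.real u ≤ μ.real uᶜ := by linarith [probReal_univ (μ := μ)]
    _ ≤ μ.real (s ∪ t) := measureReal_mono h
    _ ≤ μ.real s + μ.real t := measureReal_union_le s t

theorem stmt_2_general {Ω A : Type*} [MeasurableSpace Ω] (μ : Measure Ω) [IsProbabilityMeasure μ]
    (f astar : Ω → A) (T : Ω → Ω) (φ : A → A) :
    ((μ {x | f x ≠ astar x}).toReal + (μ {x | f (T x) ≠ φ (astar x)}).toReal) / 2 ≥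
      (1 - (μ {x | f (T x) = φ (f x)}).toReal) / 2 := by
  have h_inconsistent : {x | f (T x) = φ (f x)}ᶜ ⊆
      {x | f x ≠ astar x} ∪ {x | f (T x) ≠ φ (astar x)} := by
    intro x hx
    rw [Set.mem_union, Set.mem_ofPred_eq, Set.mem_ofPred_eq, ← not_and_or]
    rintro ⟨h_correct, h_dual_correct⟩
    exact hx (by rwa [Set.mem_ofPred_eq, h_correct])
  have h_bound := one_sub_measureReal_le_add_of_compl_subset μ h_inconsistent
  simp only [measureReal_def] at h_bound
  linarith

theorem stmt_2 {Ω A : Type*} [MeasurableSpace Ω] (μ : Measure Ω) [IsProbabilityMeasure μ]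
    [Fintype A] [DecidableEq A]
    (f astar : Ω → A) (T : Ω → Ω) (φ : A → A)
    (hφ : Function.Bijective φ)
    (hdual : ∀ x, astar (T x) = φ (astar x))
    (hR : MeasurableSet {x | f x ≠ astar x})
    (hRT : MeasurableSet {x | f (T x) ≠ φ (astar x)})
    (hC : MeasurableSet {x | f (T x) = φ (f x)}) :
    ((μ {x | f x ≠ astar x}).toReal + (μ {x | f (T x) ≠ φ (astar x)}).toReal) / 2 ≥
      (1 - (μ {x | f (T x) = φ (f x)}).toReal) / 2 :=
  stmt_2_general μ f astar T φ
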